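/- arXiv:2602.02247 — 2 statements merged into one kernel-verified Lean document; each statement's English description precedes it below -/
import Mathlib

section
/- Let h, u_m, u_i : ℝ × ℝ → ℝ be C¹ functions satisfying the continuity equation ∂ₜ h + ∂ₓ(h·u_m) = 0 and the SWLME moment equation ∂ₜ(h·u_i) + ∂ₓ(2·h·u_m·u_i) = u_m·∂ₓ(h·u_i). Then the partial kinetic energy balance holds: ∂ₜ(h·u_i²/2) + ∂ₓ(h·u_m·u_i²/2) + h·u_i²·∂ₓ u_m = 0. -/
/-! Expanding every derivative by the Leibniz rule, the left-hand side of the balance is, pointwise,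
`u_i` times the moment equation minus `u_i² / 2` times the continuity equation. -/

/-- Partial derivative with respect to time (first coordinate). -/
noncomputable def pt (f : ℝ × ℝ → ℝ) (t x : ℝ) : ℝ := deriv (fun s => f (s, x)) t

/-- Partial derivative with respect to space (second coordinate). -/
noncomputable def px (f : ℝ × ℝ → ℝ) (t x : ℝ) : ℝ := deriv (fun y => f (t, y)) x

section PartialDerivatives

variable {f g : ℝ × ℝ → ℝ} {t x : ℝ}

theorem hasDerivAt_pt (hf : DifferentiableAt ℝ f (t, x)) :
    HasDerivAt (fun s => f (s, x)) (pt f t x) t :=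
  (hf.comp t (differentiableAt_id.prodMk (differentiableAt_const x))).hasDerivAt

theorem hasDerivAt_px (hf : DifferentiableAt ℝ f (t, x)) :
    HasDerivAt (fun y => f (t, y)) (px f t x) x :=
  (hf.comp x ((differentiableAt_const t).prodMk differentiableAt_id)).hasDerivAt

theorem pt_mul (hf : DifferentiableAt ℝ f (t, x)) (hg : DifferentiableAt ℝ g (t, x)) :
    pt (fun p => f p * g p) t x = pt f t x * g (t, x) + f (t, x) * pt g t x :=
  ((hasDerivAt_pt hf).mul (hasDerivAt_pt hg)).deriv

theorem px_mul (hf : DifferentiableAt ℝ f (t, x)) (hg : DifferentiableAt ℝ g (t, x)) :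
    px (fun p => f p * g p) t x = px f t x * g (t, x) + f (t, x) * px g t x :=
  ((hasDerivAt_px hf).mul (hasDerivAt_px hg)).deriv

theorem pt_pow (hf : DifferentiableAt ℝ f (t, x)) (n : ℕ) :
    pt (fun p => f p ^ n) t x = n * f (t, x) ^ (n - 1) * pt f t x :=
  ((hasDerivAt_pt hf).pow n).deriv

theorem px_pow (hf : DifferentiableAt ℝ f (t, x)) (n : ℕ) :
    px (fun p => f p ^ n) t x = n * f (t, x) ^ (n - 1) * px f t x :=
  ((hasDerivAt_px hf).pow n).deriv

theorem pt_div_const (f : ℝ × ℝ → ℝ) (c t x : ℝ) :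
    pt (fun p => f p / c) t x = pt f t x / c :=
  deriv_div_const c

theorem px_div_const (f : ℝ × ℝ → ℝ) (c t x : ℝ) :
    px (fun p => f p / c) t x = px f t x / c :=
  deriv_div_const c

theorem px_const_mul (f : ℝ × ℝ → ℝ) (c t x : ℝ) :
    px (fun p => c * f p) t x = c * px f t x :=
  deriv_const_mul_field c

end PartialDerivatives

theorem partial_kinetic_energy_balance
    (h um ui : ℝ × ℝ → ℝ)
    (hh : ContDiff ℝ 1 h) (hum : ContDiff ℝ 1 um) (hui : ContDiff ℝ 1 ui)
    (cont : ∀ t x : ℝ, pt h t x + px (fun p => h p * um p) t x = 0)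
    (moment : ∀ t x : ℝ,
      pt (fun p => h p * ui p) t x + px (fun p => 2 * h p * um p * ui p) t x
        = um (t, x) * px (fun p => h p * ui p) t x) :
    ∀ t x : ℝ,
      pt (fun p => h p * (ui p) ^ 2 / 2) t x
        + px (fun p => h p * um p * (ui p) ^ 2 / 2) t x
        + h (t, x) * (ui (t, x)) ^ 2 * px um t x = 0 := by
  intro t x
  have dh : Differentiable ℝ h := hh.differentiable one_ne_zero
  have dum : Differentiable ℝ um := hum.differentiable one_ne_zero
  have dui : Differentiable ℝ ui := hui.differentiable one_ne_zero
  have cont := cont t x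
  have moment := moment t x
  simp (disch := fun_prop) only [pt_div_const, px_div_const, px_const_mul, pt_mul, px_mul,
    pt_pow, px_pow] at cont moment ⊢
  linear_combination ui (t, x) * moment - ui (t, x) ^ 2 / 2 * cont
end

section
/- Let the entropy variables be q₁ = −u_m²/2 − (1/2)∑_{i=1}^N u_i²/(2i+1) + g(h+b), q₂ = u_m, q_{u_i} = u_i/(2i+1). If h, u_m, u_i are C¹ solutions of the SWLME system (C), (M), (u_i), then the linear combination q₁·(C) + q₂·(M) + ∑_{i=1}^N q_{u_i}·(u_i) equals the total energy equation ∂ₜ e + ∂ₓ f = 0 with e = h u_m²/2 + (h/2)∑ u_i²/(2i+1) + g h²/2 + g h b and f = h u_m³/2 + (3 h u_m/2)∑ u_i²/(2i+1) + g h u_m (h+b). -/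
namespace SWLME

variable {ι : Type*} [Fintype ι] (c : ι → ℝ) (g : ℝ)

noncomputable section

def kineticSum (u : ι → ℝ) : ℝ := ∑ i, u i ^ 2 / c i

def energy (h um b : ℝ) (u : ι → ℝ) : ℝ :=
  h * um ^ 2 / 2 + h / 2 * kineticSum c u + g * h ^ 2 / 2 + g * h * b

def energyFlux (h um b : ℝ) (u : ι → ℝ) : ℝ :=
  h * um ^ 3 / 2 + 3 * h * um / 2 * kineticSum c u + g * h * um * (h + b)

def momentumFlux (h um : ℝ) (u : ι → ℝ) : ℝ :=
  h * um ^ 2 + h * kineticSum c u + g * h ^ 2 / 2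

def entropyVar (h um b : ℝ) (u : ι → ℝ) : ℝ :=
  -um ^ 2 / 2 - 1 / 2 * kineticSum c u + g * (h + b)

end

theorem sum_div_mul_add_mul (a h : ℝ) (u du : ι → ℝ) :
    ∑ i, u i / c i * (a * u i + h * du i) = a * kineticSum c u + h * ∑ i, u i * du i / c i := by
  rw [kineticSum, Finset.mul_sum, Finset.mul_sum, ← Finset.sum_add_distrib]
  exact Finset.sum_congr rfl fun i _ => by ring

variable {H U B : ℝ → ℝ} {V : ι → ℝ → ℝ} {dH dU r : ℝ} {dV : ι → ℝ}

theorem hasDerivAt_kineticSum (hV : ∀ i, HasDerivAt (V i) (dV i) r) :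
    HasDerivAt (fun r => kineticSum c (V · r)) (2 * ∑ i, V i r * dV i / c i) r := by
  refine (HasDerivAt.fun_sum fun i _ => ((hV i).fun_pow 2).div_const (c i)).congr_deriv ?_
  rw [Finset.mul_sum]
  exact Finset.sum_congr rfl fun i _ => by ring

theorem hasDerivAt_energy (hH : HasDerivAt H dH r) (hU : HasDerivAt U dU r)
    (hV : ∀ i, HasDerivAt (V i) (dV i) r) (b : ℝ) :
    HasDerivAt (fun r => energy c g (H r) (U r) b (V · r))
      (entropyVar c g (H r) (U r) b (V · r) * dH + U r * (dH * U r + H r * dU)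
        + ∑ i, V i r / c i * (dH * V i r + H r * dV i)) r := by
  have hK := hasDerivAt_kineticSum c hV
  refine ((((hH.fun_mul (hU.fun_pow 2)).div_const 2).add ((hH.div_const 2).fun_mul hK)).add
    (((hH.fun_pow 2).const_mul g).div_const 2) |>.add ((hH.const_mul g).mul_const b)).congr_deriv ?_
  rw [sum_div_mul_add_mul, entropyVar]
  ring

theorem entropyVar_mul_deriv_conserved (hH : DifferentiableAt ℝ H r)
    (hU : DifferentiableAt ℝ U r) (hV : ∀ i, DifferentiableAt ℝ (V i) r) (b : ℝ) :
    entropyVar c g (H r) (U r) b (V · r) * deriv H r + U r * deriv (fun r => H r * U r) r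
        + ∑ i, V i r / c i * deriv (fun r => H r * V i r) r
      = deriv (fun r => energy c g (H r) (U r) b (V · r)) r := by
  have hHV i : deriv (fun r => H r * V i r) r = deriv H r * V i r + H r * deriv (V i) r :=
    deriv_fun_mul hH (hV i)
  rw [(hasDerivAt_energy c g hH.hasDerivAt hU.hasDerivAt (fun i => (hV i).hasDerivAt) b).deriv,
    deriv_fun_mul hH hU]
  simp only [hHV]

theorem entropyVar_mul_deriv_flux (hH : DifferentiableAt ℝ H r)
    (hU : DifferentiableAt ℝ U r) (hB : DifferentiableAt ℝ B r)
    (hV : ∀ i, DifferentiableAt ℝ (V i) r) :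
    entropyVar c g (H r) (U r) (B r) (V · r) * deriv (fun r => H r * U r) r
        + U r * (deriv (fun r => momentumFlux c g (H r) (U r) (V · r)) r + g * H r * deriv B r)
        + ∑ i, V i r / c i * (deriv (fun r => 2 * H r * U r * V i r) r
            - U r * deriv (fun r => H r * V i r) r)
      = deriv (fun r => energyFlux c g (H r) (U r) (B r) (V · r)) r := by
  have hH' := hH.hasDerivAt
  have hU' := hU.hasDerivAt
  have hK := hasDerivAt_kineticSum c fun i => (hV i).hasDerivAt
  have hM : HasDerivAt (fun r => momentumFlux c g (H r) (U r) (V · r)) _ r :=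
    ((hH'.fun_mul (hU'.fun_pow 2)).add (hH'.fun_mul hK)).add
      (((hH'.fun_pow 2).const_mul g).div_const 2)
  have hF : HasDerivAt (fun r => energyFlux c g (H r) (U r) (B r) (V · r)) _ r :=
    (((hH'.fun_mul (hU'.fun_pow 3)).div_const 2).add
      ((((hH'.const_mul 3).fun_mul hU').div_const 2).fun_mul hK)).add
      (((hH'.const_mul g).fun_mul hU').fun_mul (hH'.add hB.hasDerivAt))
  have hsum : ∑ i, V i r / c i * (deriv (fun r => 2 * H r * U r * V i r) r
      - U r * deriv (fun r => H r * V i r) r)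
      = (deriv H r * U r + 2 * H r * deriv U r) * kineticSum c (V · r)
        + H r * U r * ∑ i, V i r * deriv (V i) r / c i := by
    rw [← sum_div_mul_add_mul]
    refine Finset.sum_congr rfl fun i _ => ?_
    rw [((hH'.const_mul 2).fun_mul hU' |>.fun_mul (hV i).hasDerivAt).deriv, deriv_fun_mul hH (hV i)]
    ring
  rw [hM.deriv, hF.deriv, hsum, deriv_fun_mul hH hU, entropyVar]
  ring

variable {h um : ℝ × ℝ → ℝ} {u : ι → ℝ × ℝ → ℝ} {b : ℝ → ℝ} {t x : ℝ}

theorem entropyVar_contraction_eq (hh : DifferentiableAt ℝ h (t, x))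
    (hum : DifferentiableAt ℝ um (t, x)) (hu : ∀ i, DifferentiableAt ℝ (u i) (t, x))
    (hb : DifferentiableAt ℝ b x) :
    entropyVar c g (h (t, x)) (um (t, x)) (b x) (u · (t, x))
        * (pt h t x + px (fun p => h p * um p) t x)
      + um (t, x) * (pt (fun p => h p * um p) t x
          + px (fun p => momentumFlux c g (h p) (um p) (u · p)) t x + g * h (t, x) * deriv b x)
      + ∑ i, u i (t, x) / c i * (pt (fun p => h p * u i p) t x
          + px (fun p => 2 * h p * um p * u i p) t x - um (t, x) * px (fun p => h p * u i p) t x)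
    = pt (fun p => energy c g (h p) (um p) (b p.2) (u · p)) t x
      + px (fun p => energyFlux c g (h p) (um p) (b p.2) (u · p)) t x := by
  have time := entropyVar_mul_deriv_conserved c g (H := fun s => h (s, x))
    (U := fun s => um (s, x)) (V := fun i s => u i (s, x)) (r := t)
    (by fun_prop) (by fun_prop) (fun i => by fun_prop) (b x)
  have space := entropyVar_mul_deriv_flux c g (H := fun y => h (t, y))
    (U := fun y => um (t, y)) (V := fun i y => u i (t, y)) (B := b) (r := x)
    (by fun_prop) (by fun_prop) hb (fun i => by fun_prop)
  simp only [pt, px]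
  rw [← time, ← space]
  simp only [add_sub_assoc, mul_add, Finset.sum_add_distrib]
  ring

theorem energy_conservation (hh : DifferentiableAt ℝ h (t, x))
    (hum : DifferentiableAt ℝ um (t, x)) (hu : ∀ i, DifferentiableAt ℝ (u i) (t, x))
    (hb : DifferentiableAt ℝ b x) (cont : pt h t x + px (fun p => h p * um p) t x = 0)
    (mom : pt (fun p => h p * um p) t x + px (fun p => momentumFlux c g (h p) (um p) (u · p)) t x
      = -(g * h (t, x) * deriv b x))
    (moment : ∀ i, pt (fun p => h p * u i p) t x + px (fun p => 2 * h p * um p * u i p) t x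
      = um (t, x) * px (fun p => h p * u i p) t x) :
    pt (fun p => energy c g (h p) (um p) (b p.2) (u · p)) t x
      + px (fun p => energyFlux c g (h p) (um p) (b p.2) (u · p)) t x = 0 := by
  rw [← entropyVar_contraction_eq c g hh hum hu hb, cont, mom,
    Finset.sum_eq_zero fun i _ => by rw [moment i, sub_self, mul_zero]]
  ring

end SWLME

theorem swlme_entropy_contraction_general (N : ℕ)
    (h um : ℝ × ℝ → ℝ) (u : Fin N → ℝ × ℝ → ℝ) (b : ℝ → ℝ) (g : ℝ)
    (hh : ContDiff ℝ 1 h) (hum : ContDiff ℝ 1 um) (hu : ∀ i, ContDiff ℝ 1 (u i))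
    (hb : ContDiff ℝ 1 b)
    (cont : ∀ t x : ℝ, pt h t x + px (fun p => h p * um p) t x = 0)
    (mom : ∀ t x : ℝ,
      pt (fun p => h p * um p) t x
        + px (fun p => h p * (um p) ^ 2
            + h p * ∑ j : Fin N, (u j p) ^ 2 / (2 * ((j : ℕ) + 1) + 1)
            + g * (h p) ^ 2 / 2) t x
      = -(g * h (t, x) * deriv b x))
    (moment : ∀ i : Fin N, ∀ t x : ℝ,
      pt (fun p => h p * u i p) t x + px (fun p => 2 * h p * um p * u i p) t x
        = um (t, x) * px (fun p => h p * u i p) t x) :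
    -- contracting with the entropy variables q₁, q₂, q_{uᵢ} yields the energy equation:
    ∀ t x : ℝ,
      (-(um (t, x)) ^ 2 / 2
          - (1 / 2) * ∑ i : Fin N, (u i (t, x)) ^ 2 / (2 * ((i : ℕ) + 1) + 1)
          + g * (h (t, x) + b x))
        * (pt h t x + px (fun p => h p * um p) t x)
      + um (t, x)
        * (pt (fun p => h p * um p) t x
            + px (fun p => h p * (um p) ^ 2
                + h p * ∑ j : Fin N, (u j p) ^ 2 / (2 * ((j : ℕ) + 1) + 1)
                + g * (h p) ^ 2 / 2) t x
            + g * h (t, x) * deriv b x)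
      + ∑ i : Fin N, (u i (t, x) / (2 * ((i : ℕ) + 1) + 1))
          * (pt (fun p => h p * u i p) t x + px (fun p => 2 * h p * um p * u i p) t x
              - um (t, x) * px (fun p => h p * u i p) t x)
      = pt (fun p => h p * (um p) ^ 2 / 2
            + (h p / 2) * ∑ i : Fin N, (u i p) ^ 2 / (2 * ((i : ℕ) + 1) + 1)
            + g * (h p) ^ 2 / 2 + g * h p * b p.2) t x
        + px (fun p => h p * (um p) ^ 3 / 2
            + (3 * h p * um p / 2) * ∑ i : Fin N, (u i p) ^ 2 / (2 * ((i : ℕ) + 1) + 1)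
            + g * h p * um p * (h p + b p.2)) t x
      ∧ pt (fun p => h p * (um p) ^ 2 / 2
            + (h p / 2) * ∑ i : Fin N, (u i p) ^ 2 / (2 * ((i : ℕ) + 1) + 1)
            + g * (h p) ^ 2 / 2 + g * h p * b p.2) t x
        + px (fun p => h p * (um p) ^ 3 / 2
            + (3 * h p * um p / 2) * ∑ i : Fin N, (u i p) ^ 2 / (2 * ((i : ℕ) + 1) + 1)
            + g * h p * um p * (h p + b p.2)) t x = 0 := by
  intro t x
  have hh' := hh.differentiable one_ne_zero (t, x)
  have hum' := hum.differentiable one_ne_zero (t, x)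
  have hu' i := (hu i).differentiable one_ne_zero (t, x)
  have hb' := hb.differentiable one_ne_zero x
  let c : Fin N → ℝ := fun i => 2 * ((i : ℕ) + 1) + 1
  exact ⟨SWLME.entropyVar_contraction_eq c g hh' hum' hu' hb',
    SWLME.energy_conservation c g hh' hum' hu' hb' (cont t x) (mom t x) (fun i => moment i t x)⟩

theorem swlme_entropy_contraction (N : ℕ)
    (h um : ℝ × ℝ → ℝ) (u : Fin N → ℝ × ℝ → ℝ) (b : ℝ → ℝ) (g : ℝ)
    (hh : ContDiff ℝ 1 h) (hum : ContDiff ℝ 1 um) (hu : ∀ i, ContDiff ℝ 1 (u i))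
    (hb : ContDiff ℝ 1 b) (hpos : ∀ p, 0 < h p) (hg : 0 < g)
    (cont : ∀ t x : ℝ, pt h t x + px (fun p => h p * um p) t x = 0)
    (mom : ∀ t x : ℝ,
      pt (fun p => h p * um p) t x
        + px (fun p => h p * (um p) ^ 2
            + h p * ∑ j : Fin N, (u j p) ^ 2 / (2 * ((j : ℕ) + 1) + 1)
            + g * (h p) ^ 2 / 2) t x
      = -(g * h (t, x) * deriv b x))
    (moment : ∀ i : Fin N, ∀ t x : ℝ,
      pt (fun p => h p * u i p) t x + px (fun p => 2 * h p * um p * u i p) t x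
        = um (t, x) * px (fun p => h p * u i p) t x) :
    -- contracting with the entropy variables q₁, q₂, q_{uᵢ} yields the energy equation:
    ∀ t x : ℝ,
      (-(um (t, x)) ^ 2 / 2
          - (1 / 2) * ∑ i : Fin N, (u i (t, x)) ^ 2 / (2 * ((i : ℕ) + 1) + 1)
          + g * (h (t, x) + b x))
        * (pt h t x + px (fun p => h p * um p) t x)
      + um (t, x)
        * (pt (fun p => h p * um p) t x
            + px (fun p => h p * (um p) ^ 2
                + h p * ∑ j : Fin N, (u j p) ^ 2 / (2 * ((j : ℕ) + 1) + 1)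
                + g * (h p) ^ 2 / 2) t x
            + g * h (t, x) * deriv b x)
      + ∑ i : Fin N, (u i (t, x) / (2 * ((i : ℕ) + 1) + 1))
          * (pt (fun p => h p * u i p) t x + px (fun p => 2 * h p * um p * u i p) t x
              - um (t, x) * px (fun p => h p * u i p) t x)
      = pt (fun p => h p * (um p) ^ 2 / 2
            + (h p / 2) * ∑ i : Fin N, (u i p) ^ 2 / (2 * ((i : ℕ) + 1) + 1)
            + g * (h p) ^ 2 / 2 + g * h p * b p.2) t x
        + px (fun p => h p * (um p) ^ 3 / 2
            + (3 * h p * um p / 2) * ∑ i : Fin N, (u i p) ^ 2 / (2 * ((i : ℕ) + 1) + 1)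
            + g * h p * um p * (h p + b p.2)) t x
      ∧ pt (fun p => h p * (um p) ^ 2 / 2
            + (h p / 2) * ∑ i : Fin N, (u i p) ^ 2 / (2 * ((i : ℕ) + 1) + 1)
            + g * (h p) ^ 2 / 2 + g * h p * b p.2) t x
        + px (fun p => h p * (um p) ^ 3 / 2
            + (3 * h p * um p / 2) * ∑ i : Fin N, (u i p) ^ 2 / (2 * ((i : ℕ) + 1) + 1)
            + g * h p * um p * (h p + b p.2)) t x = 0 :=
  swlme_entropy_contraction_general N h um u b g hh hum hu hb cont mom moment
end
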